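/- The partial derivative of the call price C with respect to the current time t (the Theta) equals -(sσ + αe^{rt})·e^{-(d_{t,1}^α)²/2}/(2√(2π(T-t))) - rKe^{-r(T-t)}Φ(d_{t,2}^α) + (rα/σ)e^{rt}(Φ(d_{t,1}^α) - Φ(d_{t,2}^α)). -/

import Mathlib

/-!
Write `A = s + (α/σ)e^{rt}` and `B = Ke^{-r(T-t)} + (α/σ)e^{rt} = (K + (α/σ)e^{rT})e^{-r(T-t)}`.
Then `C = A Φ(d₁) - B Φ(d₂)` is a zero-rate Black–Scholes price in the shifted quantities `A`, `B`,
with total volatility `v = σ√(T-t)`, `d₁ = (log (A/B) + v²/2)/v` and `d₂ = d₁ - v`.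
The classical identity `A φ(d₁) = B φ(d₂)` makes the terms containing `∂ₜd₁` cancel, leaving
`Θ = A' Φ(d₁) - B' Φ(d₂) + A φ(d₁) v'`.
-/

open Real

/-- Standard normal CDF. -/
noncomputable def Phi (d : ℝ) : ℝ :=
  ∫ u in Set.Iic d, Real.exp (-u ^ 2 / 2) / Real.sqrt (2 * Real.pi)

/-- d_{t,1}^α of the crisis model. -/
noncomputable def d1 (s K σ α r t T : ℝ) : ℝ :=
  (Real.log ((s + α / σ * Real.exp (r * t)) / (K + α / σ * Real.exp (r * T)))
    + (r + σ ^ 2 / 2) * (T - t)) / (σ * Real.sqrt (T - t))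

/-- d_{t,2}^α of the crisis model. -/
noncomputable def d2 (s K σ α r t T : ℝ) : ℝ :=
  d1 s K σ α r t T - σ * Real.sqrt (T - t)

/-- Crisis-model European call price. -/
noncomputable def C (s K σ α r t T : ℝ) : ℝ :=
  (s + α / σ * Real.exp (r * t)) * Phi (d1 s K σ α r t T)
    - (K * Real.exp (-r * (T - t)) + α / σ * Real.exp (r * t)) * Phi (d2 s K σ α r t T)

open MeasureTheory

noncomputable def phi (x : ℝ) : ℝ :=
  Real.exp (-x ^ 2 / 2) / Real.sqrt (2 * π)

theorem hasDerivAt_integral_Iic {E : Type*} [NormedAddCommGroup E] [NormedSpace ℝ E]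
    [CompleteSpace E] {f : ℝ → E} (hf : Integrable f) (hcont : Continuous f) (x : ℝ) :
    HasDerivAt (fun y => ∫ u in Set.Iic y, f u) (f x) x := by
  have hsplit : (fun y => ∫ u in Set.Iic y, f u)
      = fun y => (∫ u in Set.Iic 0, f u) + ∫ u in (0 : ℝ)..y, f u := by
    funext y
    rw [← intervalIntegral.integral_Iic_sub_Iic hf.integrableOn hf.integrableOn]
    abel
  rw [hsplit]
  exact (intervalIntegral.integral_hasDerivAt_right hf.intervalIntegrable
    (hcont.stronglyMeasurableAtFilter _ _) hcont.continuousAt).const_add _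

theorem integrable_phi : Integrable phi := by
  have h := (integrable_exp_neg_mul_sq (b := 1 / 2) (by norm_num)).div_const (Real.sqrt (2 * π))
  convert h using 2 with u
  rw [phi]
  ring_nf

theorem hasDerivAt_Phi (x : ℝ) : HasDerivAt Phi (phi x) x :=
  hasDerivAt_integral_Iic integrable_phi (by unfold phi; fun_prop) x

theorem mul_phi_eq_mul_phi_sub {a b v : ℝ} (hab : 0 < a / b) (hv : v ≠ 0) :
    a * phi ((Real.log (a / b) + v ^ 2 / 2) / v)
      = b * phi ((Real.log (a / b) + v ^ 2 / 2) / v - v) := by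
  set d := (Real.log (a / b) + v ^ 2 / 2) / v
  have hb : b ≠ 0 := by rintro rfl; simp at hab
  have hdv : d * v = Real.log (a / b) + v ^ 2 / 2 := div_mul_cancel₀ _ hv
  have hexp : Real.exp (-(d - v) ^ 2 / 2) = Real.exp (-d ^ 2 / 2) * (a / b) := by
    rw [← Real.exp_log hab, ← Real.exp_add]
    congr 1
    linear_combination hdv
  rw [phi, phi, hexp]
  field_simp

theorem hasDerivAt_mul_Phi_sub_mul_Phi {a b d v : ℝ → ℝ} {a' b' v' t : ℝ}
    (ha : HasDerivAt a a' t) (hb : HasDerivAt b b' t) (hd : DifferentiableAt ℝ d t)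
    (hv : HasDerivAt v v' t) (hphi : a t * phi (d t) = b t * phi (d t - v t)) :
    HasDerivAt (fun u => a u * Phi (d u) - b u * Phi (d u - v u))
      (a' * Phi (d t) - b' * Phi (d t - v t) + a t * phi (d t) * v') t := by
  obtain ⟨d', hd'⟩ : ∃ d' : ℝ, HasDerivAt d d' t := ⟨_, hd.hasDerivAt⟩
  have h := (ha.mul ((hasDerivAt_Phi _).comp t hd')).sub
    (hb.mul ((hasDerivAt_Phi _).comp t (hd'.sub hv)))
  refine h.congr_deriv ?_
  simp only [Function.comp_apply, Pi.sub_apply]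
  linear_combination (d' - v') * hphi

theorem discounted_shifted_strike_eq (K σ α r t T : ℝ) :
    K * Real.exp (-r * (T - t)) + α / σ * Real.exp (r * t)
      = (K + α / σ * Real.exp (r * T)) * Real.exp (-r * (T - t)) := by
  rw [add_mul, mul_assoc, ← Real.exp_add]
  ring_nf

theorem d1_eq_log_div_add {s K σ α r t T : ℝ} (htT : t < T)
    (h1 : 0 < s + α / σ * Real.exp (r * t)) (h2 : 0 < K + α / σ * Real.exp (r * T)) :
    d1 s K σ α r t T
      = (Real.log ((s + α / σ * Real.exp (r * t)) /
            (K * Real.exp (-r * (T - t)) + α / σ * Real.exp (r * t)))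
          + (σ * Real.sqrt (T - t)) ^ 2 / 2) / (σ * Real.sqrt (T - t)) := by
  have hlog : Real.log ((s + α / σ * Real.exp (r * t)) /
        ((K + α / σ * Real.exp (r * T)) * Real.exp (-r * (T - t))))
      = Real.log ((s + α / σ * Real.exp (r * t)) / (K + α / σ * Real.exp (r * T)))
        + r * (T - t) := by
    rw [← div_div, Real.log_div (div_pos h1 h2).ne' (Real.exp_ne_zero _), Real.log_exp]
    ring
  rw [discounted_shifted_strike_eq, hlog, mul_pow, Real.sq_sqrt (sub_pos.mpr htT).le, d1]
  ring_nf

theorem differentiableAt_d1 {s K σ α r t T : ℝ} (hσ : σ ≠ 0) (htT : t < T)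
    (h1 : 0 < s + α / σ * Real.exp (r * t)) (h2 : 0 < K + α / σ * Real.exp (r * T)) :
    DifferentiableAt ℝ (fun u => d1 s K σ α r u T) t := by
  have hτ : 0 < T - t := sub_pos.mpr htT
  have hv : σ * Real.sqrt (T - t) ≠ 0 := mul_ne_zero hσ (Real.sqrt_pos.mpr hτ).ne'
  unfold d1
  fun_prop (disch := first | exact (div_pos h1 h2).ne' | exact hτ.ne' | exact hv)

theorem crisis_theta_general (s K σ α r t T : ℝ)
    (hσ : 0 < σ) (htT : t < T)
    (h1 : 0 < s + α / σ * Real.exp (r * t))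
    (h2 : 0 < K + α / σ * Real.exp (r * T)) :
    HasDerivAt (fun u => C s K σ α r u T)
      (-((s * σ + α * Real.exp (r * t)) * Real.exp (-(d1 s K σ α r t T) ^ 2 / 2) /
          (2 * Real.sqrt (2 * Real.pi * (T - t))))
        - r * K * Real.exp (-r * (T - t)) * Phi (d2 s K σ α r t T)
        + r * α / σ * Real.exp (r * t) *
          (Phi (d1 s K σ α r t T) - Phi (d2 s K σ α r t T))) t := by
  have hτ : 0 < T - t := sub_pos.mpr htT
  have hA : HasDerivAt (fun u => s + α / σ * Real.exp (r * u))
      (r * α / σ * Real.exp (r * t)) t :=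
    ((((hasDerivAt_id' t).const_mul r).exp.const_mul (α / σ)).const_add s).congr_deriv (by ring)
  have hB : HasDerivAt (fun u => K * Real.exp (-r * (T - u)) + α / σ * Real.exp (r * u))
      (r * K * Real.exp (-r * (T - t)) + r * α / σ * Real.exp (r * t)) t :=
    ((((hasDerivAt_id' t).const_sub T).const_mul (-r)).exp.const_mul K |>.add
      (((hasDerivAt_id' t).const_mul r).exp.const_mul (α / σ))).congr_deriv (by ring)
  have hv : HasDerivAt (fun u => σ * Real.sqrt (T - u)) (-σ / (2 * Real.sqrt (T - t))) t :=
    ((((hasDerivAt_id' t).const_sub T).sqrt hτ.ne').const_mul σ).congr_deriv (by ring)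
  have hB_pos : 0 < K * Real.exp (-r * (T - t)) + α / σ * Real.exp (r * t) := by
    rw [discounted_shifted_strike_eq]
    exact mul_pos h2 (Real.exp_pos _)
  have hphi := mul_phi_eq_mul_phi_sub (div_pos h1 hB_pos)
    (mul_pos hσ (Real.sqrt_pos.mpr hτ)).ne'
  rw [← d1_eq_log_div_add htT h1 h2] at hphi
  refine (hasDerivAt_mul_Phi_sub_mul_Phi hA hB (differentiableAt_d1 hσ.ne' htT h1 h2) hv
    hphi).congr_deriv ?_
  rw [phi, d2, Real.sqrt_mul (by positivity : (0 : ℝ) ≤ 2 * π) (T - t)]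
  field_simp
  ring

/-- Theta of the crisis-model call. -/
theorem crisis_theta (s K σ α r t T : ℝ)
    (hs : 0 < s) (hK : 0 < K) (hσ : 0 < σ) (hα : 0 ≤ α)
    (ht : 0 ≤ t) (htT : t < T)
    (h1 : 0 < s + α / σ * Real.exp (r * t))
    (h2 : 0 < K + α / σ * Real.exp (r * T)) :
    HasDerivAt (fun u => C s K σ α r u T)
      (-((s * σ + α * Real.exp (r * t)) * Real.exp (-(d1 s K σ α r t T) ^ 2 / 2) /
          (2 * Real.sqrt (2 * Real.pi * (T - t))))
        - r * K * Real.exp (-r * (T - t)) * Phi (d2 s K σ α r t T)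
        + r * α / σ * Real.exp (r * t) *
          (Phi (d1 s K σ α r t T) - Phi (d2 s K σ α r t T))) t :=
  crisis_theta_general s K σ α r t T hσ htT h1 h2
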